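/- For every letter i ∈ A and every word u over A, the word i · σ_i(u) can be written as a sequence of blocks each equal to i or of the form i j with j ≠ i; consequently, if w is a factor of σ_i(u), then the number of occurrences of i in w satisfies |w|_i ≥ ⌊|w|/2⌋. -/

import Mathlib

/-- The Arnoux-Rauzy substitution `σ_i : i ↦ i, j ↦ j i` for `j ≠ i`,
extended to words. -/
def sigmaSub {A : Type*} [DecidableEq A] (i : A) (w : List A) : List A :=
  w.flatMap fun j => if j = i then [i] else [j, i]

/-!
Every letter of `σ_i(u)` other than `i` is immediately followed by `i`, so no two adjacent letters
of `σ_i(u)` both differ from `i`. This property passes to factors, and a word with it contains `i`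
in each of its `⌊|w|/2⌋` disjoint pairs of consecutive letters.
-/

namespace List

variable {A : Type*} [DecidableEq A]

theorem length_div_two_le_count_of_isChain (i : A) :
    ∀ w : List A, IsChain (fun a b => a = i ∨ b = i) w → w.length / 2 ≤ w.count i
  | [], _ | [_], _ => by simp
  | a :: b :: w, h => by
    obtain ⟨hab, hw⟩ := isChain_cons_cons.mp h
    have ih := length_div_two_le_count_of_isChain i w hw.tail
    have hpair : 1 + w.count i ≤ (a :: b :: w).count i := by
      rcases hab with rfl | rfl <;> simp [count_cons] <;> omega
    simp only [length_cons]
    omega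

end List

section

open List

variable {A : Type*} [DecidableEq A]

@[simp]
theorem sigmaSub_nil (i : A) : sigmaSub i [] = [] := rfl

@[simp]
theorem sigmaSub_cons (i a : A) (u : List A) :
    sigmaSub i (a :: u) = (if a = i then [i] else [a, i]) ++ sigmaSub i u := by
  simp [sigmaSub]

theorem exists_blocks_cons_sigmaSub (i : A) (u : List A) :
    ∃ L : List (List A), (∀ b ∈ L, b = [i] ∨ ∃ j, j ≠ i ∧ b = [i, j]) ∧
      L.flatten = i :: sigmaSub i u := by
  induction u with
  | nil => exact ⟨[[i]], by simp⟩
  | cons a u ih =>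
    obtain ⟨L, hL, hflat⟩ := ih
    by_cases ha : a = i
    · exact ⟨[i] :: L, forall_mem_cons.mpr ⟨Or.inl rfl, hL⟩, by simp [ha, hflat]⟩
    · exact ⟨[i, a] :: L, forall_mem_cons.mpr ⟨Or.inr ⟨a, ha, rfl⟩, hL⟩, by simp [ha, hflat]⟩

theorem isChain_sigmaSub (i : A) (u : List A) :
    IsChain (fun a b => a = i ∨ b = i) (sigmaSub i u) := by
  induction u with
  | nil => exact isChain_nil
  | cons a u ih =>
    rw [sigmaSub_cons]
    refine IsChain.append (by split <;> simp) ih fun x hx _ _ => Or.inl ?_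
    split at hx <;> simp_all

end

/-- The word `i · σ_i(u)` is a concatenation of blocks each equal to `[i]` or
of the form `[i, j]` with `j ≠ i`; consequently every factor `w` of `σ_i(u)`
satisfies `|w|_i ≥ ⌊|w|/2⌋`. -/
theorem block_decomposition_and_count {A : Type*} [DecidableEq A]
    (i : A) (u : List A) :
    (∃ L : List (List A), (∀ b ∈ L, b = [i] ∨ ∃ j, j ≠ i ∧ b = [i, j]) ∧
      L.flatten = i :: sigmaSub i u) ∧
    (∀ w : List A, w <:+: sigmaSub i u → w.length / 2 ≤ w.count i) :=
  ⟨exists_blocks_cons_sigmaSub i u, fun w hw =>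
    List.length_div_two_le_count_of_isChain i w ((isChain_sigmaSub i u).infix hw)⟩
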